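/- arXiv:1203.6397 — 2 statements merged into one kernel-verified Lean document; each statement's English description precedes it below -/
import Mathlib

section
/- Let M be a matroid on a finite metric space (U,d) of rank at least 3, let f be a normalized, non-negative, monotone submodular set function on U, let λ ≥ 0, and set φ(S) = f(S) + λ·d(S). Suppose S is a basis of M that is locally optimal under single swaps: for every u ∈ U∖S and v ∈ S such that (S∖{v})∪{u} is independent in M, φ((S∖{v})∪{u}) ≤ φ(S). Then for every basis O of M, φ(S) ≥ (1/2)·φ(O). (The single-swap local search algorithm is a 2-approximation for max-sum diversification with a matroid constraint.) -/
open Finset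

/-!
By Hall's theorem and the augmentation axiom there is an injection `g : O \ S → S \ O` such
that every swap `S - g o + o` is independent, so local optimality makes the total gain of these
swaps non-positive. Submodularity bounds the total gain in `f` below by `f O - 2 f S`, and the
triangle inequality bounds the total gain in dispersion below by `d(O) - 2 d(S)`: it is
averaged over the points `g o` when `|O \ S| ≥ 3`, and routed through a point of `S ∩ O` when
`|O \ S| = 2`, which exists because the rank is at least 3.
-/

/-- `dispSet d S` is the sum of `d u v` over all unordered pairs `{u,v}` of distinct
elements of `S` (for a symmetric `d` with `d u u = 0`, half the double sum). -/
noncomputable def dispSet {U : Type*} (d : U → U → ℝ) (S : Finset U) : ℝ :=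
  (∑ u ∈ S, ∑ v ∈ S, d u v) / 2

section Dispersion

variable {U : Type*} {d : U → U → ℝ}

noncomputable def crossSum (d : U → U → ℝ) (P Q : Finset U) : ℝ :=
  ∑ u ∈ P, ∑ v ∈ Q, d u v

lemma crossSum_comm (hsymm : ∀ u v, d u v = d v u) (P Q : Finset U) :
    crossSum d P Q = crossSum d Q P := by
  rw [crossSum, crossSum, sum_comm]
  exact sum_congr rfl fun _ _ => sum_congr rfl fun _ _ => hsymm _ _

lemma crossSum_nonneg (hnonneg : ∀ u v, 0 ≤ d u v) (P Q : Finset U) : 0 ≤ crossSum d P Q :=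
  sum_nonneg fun _ _ => sum_nonneg fun _ _ => hnonneg _ _

lemma two_mul_dispSet (T : Finset U) : 2 * dispSet d T = crossSum d T T := by
  rw [dispSet, crossSum]
  ring

lemma dispSet_eq_zero_of_card_le_one (hrefl : ∀ u, d u u = 0) {T : Finset U}
    (hT : T.card ≤ 1) : dispSet d T = 0 := by
  have hsub := card_le_one.1 hT
  rw [dispSet, sum_eq_zero fun u hu => sum_eq_zero fun v hv => by rw [hsub v hv u hu, hrefl]]
  simp

variable [DecidableEq U]

lemma crossSum_union_left {P P' : Finset U} (h : Disjoint P P') (Q : Finset U) :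
    crossSum d (P ∪ P') Q = crossSum d P Q + crossSum d P' Q :=
  sum_union h

lemma crossSum_union_right (P : Finset U) {Q Q' : Finset U} (h : Disjoint Q Q') :
    crossSum d P (Q ∪ Q') = crossSum d P Q + crossSum d P Q' := by
  simp only [crossSum, sum_union h, sum_add_distrib]

lemma dispSet_union (hsymm : ∀ u v, d u v = d v u) {P Q : Finset U} (h : Disjoint P Q) :
    dispSet d (P ∪ Q) = dispSet d P + crossSum d P Q + dispSet d Q := by
  have hPQ := two_mul_dispSet (d := d) (P ∪ Q)
  rw [crossSum_union_left h, crossSum_union_right _ h, crossSum_union_right _ h,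
    crossSum_comm hsymm Q P, ← two_mul_dispSet, ← two_mul_dispSet] at hPQ
  linarith

lemma dispSet_insert (hsymm : ∀ u v, d u v = d v u) (hrefl : ∀ u, d u u = 0)
    {u : U} {T : Finset U} (hu : u ∉ T) :
    dispSet d (insert u T) = dispSet d T + ∑ x ∈ T, d u x := by
  rw [insert_eq, dispSet_union hsymm (disjoint_singleton_left.2 hu)]
  simp [dispSet, crossSum, hrefl]
  ring

lemma dispSet_pair (hsymm : ∀ u v, d u v = d v u) (hrefl : ∀ u, d u u = 0)
    {a b : U} (hab : a ≠ b) : dispSet d {a, b} = d a b := by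
  rw [dispSet_insert hsymm hrefl (notMem_singleton.2 hab)]
  simp [dispSet, hrefl]

lemma dispSet_insert_erase_sub (hsymm : ∀ u v, d u v = d v u) (hrefl : ∀ u, d u u = 0)
    {S : Finset U} {o v : U} (ho : o ∉ S) (hv : v ∈ S) :
    dispSet d (insert o (S.erase v)) - dispSet d S =
      ∑ x ∈ S.erase v, d o x - ∑ x ∈ S, d v x := by
  have hS := dispSet_insert hsymm hrefl (notMem_erase v S)
  rw [insert_erase hv, sum_erase _ (hrefl v)] at hS
  rw [dispSet_insert hsymm hrefl fun h => ho (mem_of_mem_erase h), hS]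
  ring

lemma dispSet_le_card_sub_one_mul_sum (hsymm : ∀ u v, d u v = d v u) (hrefl : ∀ u, d u u = 0)
    (htri : ∀ u v w, d u w ≤ d u v + d v w) (T : Finset U) (y : U) :
    dispSet d T ≤ (T.card - 1) * ∑ i ∈ T, d i y := by
  have hoff : ∀ i ∈ T, ∑ j ∈ T, d i j ≤ ∑ j ∈ T.erase i, (d i y + d j y) := fun i _ => by
    rw [← sum_erase _ (hrefl i)]
    exact sum_le_sum fun j _ => (htri i y j).trans_eq (by rw [hsymm y j])
  have hcount : ∀ i ∈ T, ∑ j ∈ T.erase i, (d i y + d j y) =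
      (T.card - 2) * d i y + ∑ j ∈ T, d j y := fun i hi => by
    rw [sum_add_distrib, sum_const, nsmul_eq_mul, cast_card_erase_of_mem hi,
      sum_erase_eq_sub hi]
    ring
  have h := (sum_le_sum hoff).trans_eq (sum_congr rfl hcount)
  rw [sum_add_distrib, ← mul_sum, sum_const, nsmul_eq_mul] at h
  rw [dispSet]
  linarith

end Dispersion

section Metric

variable {U : Type*} [DecidableEq U] {d : U → U → ℝ}

lemma sum_dispSet_erase (hsymm : ∀ u v, d u v = d v u) (hrefl : ∀ u, d u u = 0)
    (C : Finset U) : ∑ ℓ ∈ C, dispSet d (C.erase ℓ) = (C.card - 2) * dispSet d C := by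
  have h : ∀ ℓ ∈ C, dispSet d (C.erase ℓ) = dispSet d C - ∑ x ∈ C, d ℓ x := fun ℓ hℓ => by
    have := dispSet_insert hsymm hrefl (notMem_erase ℓ C)
    rw [insert_erase hℓ, sum_erase _ (hrefl ℓ)] at this
    linarith
  have hC := two_mul_dispSet (d := d) C
  rw [crossSum] at hC
  rw [sum_congr rfl h, sum_sub_distrib, sum_const, nsmul_eq_mul, ← hC]
  ring

/-- Averaging the triangle inequality through `y ℓ` over the `C.card - 2` sets `C.erase ℓ`
containing a given pair. -/
lemma dispSet_le_sum_sum_erase (hsymm : ∀ u v, d u v = d v u) (hrefl : ∀ u, d u u = 0)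
    (htri : ∀ u v w, d u w ≤ d u v + d v w) {C : Finset U} (hC : 3 ≤ C.card) (y : U → U) :
    dispSet d C ≤ ∑ ℓ ∈ C, ∑ i ∈ C.erase ℓ, d i (y ℓ) := by
  have hpos : (0 : ℝ) < C.card - 2 := by
    have : (3 : ℝ) ≤ C.card := by exact_mod_cast hC
    linarith
  refine le_of_mul_le_mul_left ?_ hpos
  rw [← sum_dispSet_erase hsymm hrefl, mul_sum]
  refine sum_le_sum fun ℓ hℓ => ?_
  have h := dispSet_le_card_sub_one_mul_sum hsymm hrefl htri (C.erase ℓ) (y ℓ)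
  rwa [cast_card_erase_of_mem hℓ, sub_sub, one_add_one_eq_two] at h

lemma sum_sum_erase_le_of_injOn (hnonneg : ∀ u v, 0 ≤ d u v) {B C : Finset U} {g : U → U}
    (hg_inj : Set.InjOn g C) (hg : ∀ o ∈ C, g o ∈ B) :
    ∑ ℓ ∈ C, ∑ i ∈ C.erase ℓ, d i (g ℓ) ≤ ∑ i ∈ C, ∑ x ∈ B.erase (g i), d i x := by
  rw [sum_comm' (t' := C) (s' := C.erase) fun ℓ i => by
    simp only [mem_erase]
    exact ⟨fun ⟨h₁, h₂, h₃⟩ => ⟨⟨Ne.symm h₂, h₁⟩, h₃⟩, fun ⟨⟨h₁, h₂⟩, h₃⟩ => ⟨h₂, Ne.symm h₁, h₃⟩⟩]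
  refine sum_le_sum fun i hi => ?_
  rw [← sum_image (hg_inj.mono fun _ hx => mem_of_mem_erase hx)]
  refine sum_le_sum_of_subset_of_nonneg (fun x hx => ?_) fun _ _ _ => hnonneg _ _
  obtain ⟨ℓ, hℓ, rfl⟩ := mem_image.1 hx
  obtain ⟨hℓi, hℓC⟩ := mem_erase.1 hℓ
  exact mem_erase.2 ⟨fun h => hℓi (hg_inj hℓC hi h), hg ℓ hℓC⟩

lemma dispSet_le_sum_sum_erase_add_crossSum (hsymm : ∀ u v, d u v = d v u)
    (hnonneg : ∀ u v, 0 ≤ d u v) (hrefl : ∀ u, d u u = 0) (htri : ∀ u v w, d u w ≤ d u v + d v w)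
    {A B C : Finset U} {g : U → U} (hg_inj : Set.InjOn g C) (hg : ∀ o ∈ C, g o ∈ B)
    (hA : C.card = 2 → A.Nonempty) :
    dispSet d C ≤ ∑ o ∈ C, ∑ x ∈ B.erase (g o), d o x + crossSum d A B := by
  have hQ : 0 ≤ ∑ o ∈ C, ∑ x ∈ B.erase (g o), d o x :=
    sum_nonneg fun _ _ => sum_nonneg fun _ _ => hnonneg _ _
  have hAB := crossSum_nonneg hnonneg A B
  obtain hC | hC | hC : C.card ≤ 1 ∨ C.card = 2 ∨ 3 ≤ C.card := by omega
  · rw [dispSet_eq_zero_of_card_le_one hrefl hC]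
    linarith
  · obtain ⟨a, ha⟩ := hA hC
    obtain ⟨o₁, o₂, hne, rfl⟩ := card_eq_two.1 hC
    have h₁ := hg o₁ (by simp)
    have h₂ := hg o₂ (by simp)
    have hgne : g o₁ ≠ g o₂ := fun h => hne (hg_inj (by simp) (by simp) h)
    -- `o₁ → g o₂ → a → g o₁ → o₂`
    have hpath : d o₁ o₂ ≤ d o₁ (g o₂) + d o₂ (g o₁) + (d a (g o₁) + d a (g o₂)) := by
      linarith [htri o₁ (g o₂) o₂, htri (g o₂) (g o₁) o₂, htri (g o₂) a (g o₁),
        hsymm (g o₂) a, hsymm (g o₁) o₂]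
    have hB₁ : d o₁ (g o₂) ≤ ∑ x ∈ B.erase (g o₁), d o₁ x :=
      single_le_sum (f := d o₁) (fun _ _ => hnonneg _ _) (mem_erase.2 ⟨hgne.symm, h₂⟩)
    have hB₂ : d o₂ (g o₁) ≤ ∑ x ∈ B.erase (g o₂), d o₂ x :=
      single_le_sum (f := d o₂) (fun _ _ => hnonneg _ _) (mem_erase.2 ⟨hgne, h₁⟩)
    have hAB' : d a (g o₁) + d a (g o₂) ≤ crossSum d A B := by
      calc d a (g o₁) + d a (g o₂) = ∑ x ∈ {g o₁, g o₂}, d a x := (sum_pair hgne).symm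
        _ ≤ ∑ x ∈ B, d a x :=
          sum_le_sum_of_subset_of_nonneg (insert_subset h₁ (singleton_subset_iff.2 h₂))
            fun _ _ _ => hnonneg _ _
        _ ≤ crossSum d A B :=
          single_le_sum (f := fun u => ∑ x ∈ B, d u x)
            (fun _ _ => sum_nonneg fun _ _ => hnonneg _ _) ha
    rw [dispSet_pair hsymm hrefl hne, sum_pair hne]
    linarith
  · have := dispSet_le_sum_sum_erase hsymm hrefl htri hC g
    have := sum_sum_erase_le_of_injOn hnonneg hg_inj hg
    linarith

lemma dispSet_le_two_mul_add_sum_swap (hsymm : ∀ u v, d u v = d v u)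
    (hnonneg : ∀ u v, 0 ≤ d u v) (hrefl : ∀ u, d u u = 0) (htri : ∀ u v w, d u w ≤ d u v + d v w)
    {S O : Finset U} {g : U → U} (hg_inj : Set.InjOn g ↑(O \ S)) (hg : ∀ o ∈ O \ S, g o ∈ S \ O)
    (hO : 3 ≤ O.card) :
    dispSet d O ≤
      2 * dispSet d S + ∑ o ∈ O \ S, (dispSet d (insert o (S.erase (g o))) - dispSet d S) := by
  set A := S ∩ O
  set B := S \ O
  set C := O \ S
  have hSAB : A ∪ B = S := by rw [union_comm]; exact sdiff_union_inter S O
  have hOAC : A ∪ C = O := by rw [union_comm, show A = O ∩ S from inter_comm S O]; exact sdiff_union_inter O S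
  have hAB : Disjoint A B := disjoint_sdiff_inter S O |>.symm
  have hAC : Disjoint A C := by rw [show A = O ∩ S from inter_comm S O]; exact disjoint_sdiff_inter O S |>.symm
  have hgain : ∀ o ∈ C, dispSet d (insert o (S.erase (g o))) - dispSet d S =
      ∑ x ∈ A, d o x + ∑ x ∈ B.erase (g o), d o x - ∑ x ∈ S, d (g o) x := fun o ho => by
    have hgo : g o ∉ A := disjoint_right.1 hAB (hg o ho)
    have hSe : S.erase (g o) = A ∪ B.erase (g o) := by
      rw [← hSAB, erase_union_distrib, erase_eq_of_notMem hgo]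
    rw [dispSet_insert_erase_sub hsymm hrefl (mem_sdiff.1 ho).2 (mem_sdiff.1 (hg o ho)).1, hSe,
      sum_union (hAB.mono_right (erase_subset _ _))]
  have hR : ∑ o ∈ C, ∑ x ∈ S, d (g o) x ≤ crossSum d B S := by
    rw [← sum_image (f := fun v => ∑ x ∈ S, d v x) hg_inj]
    exact sum_le_sum_of_subset_of_nonneg (image_subset_iff.2 hg)
      fun _ _ _ => sum_nonneg fun _ _ => hnonneg _ _
  have hC := dispSet_le_sum_sum_erase_add_crossSum hsymm hnonneg hrefl htri (A := A) hg_inj hg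
    fun h2 => card_pos.1 (by rw [← hOAC, card_union_of_disjoint hAC] at hO; omega)
  have hSsplit := crossSum_union_left (d := d) hAB S
  have hAsplit := crossSum_union_right (d := d) A hAB
  rw [hSAB, ← two_mul_dispSet] at hSsplit hAsplit
  have hA := crossSum_nonneg hnonneg A A
  have hO' := dispSet_union hsymm hAC
  rw [hOAC] at hO'
  have hCA : ∑ o ∈ C, ∑ x ∈ A, d o x = crossSum d A C := crossSum_comm hsymm C A
  rw [sum_congr rfl hgain, sum_sub_distrib, sum_add_distrib, hCA]
  linarith [two_mul_dispSet (d := d) A]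

end Metric

section Submodular

variable {U : Type*} [DecidableEq U]

def IsSubmodular (f : Finset U → ℝ) : Prop :=
  ∀ S T : Finset U, ∀ u, S ⊆ T → f (insert u T) - f T ≤ f (insert u S) - f S

namespace IsSubmodular

variable {f : Finset U → ℝ}

lemma sub_le_sum_insert_sub (hf : IsSubmodular f) (S C : Finset U) :
    f (S ∪ C) - f S ≤ ∑ o ∈ C, (f (insert o S) - f S) := by
  induction C using Finset.induction_on with
  | empty => simp
  | insert o C ho ih =>
    rw [sum_insert ho, union_insert]
    linarith [hf S (S ∪ C) o subset_union_left]

lemma sum_sub_erase_le {S V : Finset U} (hf : IsSubmodular f) (hV : V ⊆ S) :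
    ∑ v ∈ V, (f S - f (S.erase v)) ≤ f S - f (S \ V) := by
  induction V using Finset.induction_on with
  | empty => simp
  | insert v V hv ih =>
    have hvS : v ∈ S := hV (mem_insert_self v V)
    have h := hf ((S \ V).erase v) (S.erase v) v (erase_subset_erase v sdiff_subset)
    rw [insert_erase hvS, insert_erase (mem_sdiff.2 ⟨hvS, hv⟩), ← sdiff_insert] at h
    rw [sum_insert hv]
    linarith [ih ((subset_insert v V).trans hV)]

lemma sub_add_sub_le_insert_erase (hf : IsSubmodular f) {S : Finset U} {v : U} (hv : v ∈ S)
    (o : U) : f (insert o S) - f S + (f (S.erase v) - f S) ≤ f (insert o (S.erase v)) - f S := by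
  have h := hf (S.erase v) (insert o (S.erase v)) v (subset_insert o _)
  rw [insert_comm, insert_erase hv] at h
  linarith

lemma union_le_two_mul_add_sum_swap (hf : IsSubmodular f) (hf_nonneg : ∀ T, 0 ≤ f T)
    {S C : Finset U} {g : U → U} (hg_inj : Set.InjOn g C) (hg : ∀ o ∈ C, g o ∈ S) :
    f (S ∪ C) ≤ 2 * f S + ∑ o ∈ C, (f (insert o (S.erase (g o))) - f S) := by
  have hins := hf.sub_le_sum_insert_sub S C
  have hera := hf.sum_sub_erase_le (image_subset_iff.2 hg)
  rw [sum_image hg_inj] at hera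
  have hswap := sum_le_sum fun o ho => hf.sub_add_sub_le_insert_erase (hg o ho) o
  rw [sum_add_distrib, sum_sub_distrib, sum_sub_distrib] at hswap
  rw [sum_sub_distrib] at hera hins
  linarith [hf_nonneg (S \ C.image g)]

end IsSubmodular

end Submodular

lemma Finset.exists_injOn_of_forall_card_le_card_biUnion {ι α : Type*} [DecidableEq α]
    [Nonempty α] {s : Finset ι} {t : ι → Finset α} (h : ∀ X ⊆ s, X.card ≤ (X.biUnion t).card) :
    ∃ g : ι → α, Set.InjOn g s ∧ ∀ x ∈ s, g x ∈ t x := by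
  classical
  obtain ⟨g, hg_inj, hg⟩ :=
    (all_card_le_biUnion_card_iff_exists_injective fun x : s => t x).1 fun X => by
      have hX := h (X.image Subtype.val) fun x hx => by
        obtain ⟨y, -, rfl⟩ := mem_image.1 hx
        exact y.2
      rwa [card_image_of_injective _ Subtype.val_injective, image_biUnion] at hX
  refine ⟨fun x => if hx : x ∈ s then g ⟨x, hx⟩ else Classical.arbitrary α,
    fun x hx y hy hxy => ?_, fun x hx => ?_⟩
  · simp only [mem_coe] at hx hy
    simp only [dif_pos hx, dif_pos hy] at hxy
    exact congrArg Subtype.val (hg_inj hxy)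
  · simp only [dif_pos hx]
    exact hg _

section Matroid

variable {U : Type*} [DecidableEq U] {Ind : Finset U → Prop}

lemma card_le_card_of_maximal
    (h_aug : ∀ ⦃A B : Finset U⦄, Ind A → Ind B → B.card < A.card → ∃ e ∈ A \ B, Ind (insert e B))
    {S O : Finset U} (hS : Ind S) (hS_max : ∀ T, Ind T → S ⊆ T → S = T) (hO : Ind O) :
    O.card ≤ S.card := by
  by_contra! h
  obtain ⟨e, he, hind⟩ := h_aug hO hS h
  exact (mem_sdiff.1 he).2 (hS_max _ hind (subset_insert e S) ▸ mem_insert_self e S)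

lemma exists_indep_superset_card_eq
    (h_aug : ∀ ⦃A B : Finset U⦄, Ind A → Ind B → B.card < A.card → ∃ e ∈ A \ B, Ind (insert e B))
    {S K : Finset U} (hS : Ind S) (hK : Ind K) (hKS : K.card ≤ S.card) :
    ∃ J, K ⊆ J ∧ J ⊆ K ∪ S ∧ Ind J ∧ J.card = S.card := by
  induction hn : S.card - K.card generalizing K with
  | zero => exact ⟨K, subset_rfl, subset_union_left, hK, by omega⟩
  | succ n ih =>
    obtain ⟨e, he, hKe⟩ := h_aug hS hK (by omega)
    obtain ⟨heS, heK⟩ := mem_sdiff.1 he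
    have hcard := card_insert_of_notMem heK
    obtain ⟨J, hKJ, hJ, hJind, hJcard⟩ := ih hKe (by omega) (by omega)
    refine ⟨J, (subset_insert e K).trans hKJ, hJ.trans ?_, hJind, hJcard⟩
    rw [insert_union, insert_eq_of_mem (mem_union_right K heS)]

lemma exists_indep_insert_erase
    (h_aug : ∀ ⦃A B : Finset U⦄, Ind A → Ind B → B.card < A.card → ∃ e ∈ A \ B, Ind (insert e B))
    {S K : Finset U} {o : U} (hS : Ind S) (hKS : K ⊆ S) (hK : K.card < S.card) (ho : o ∉ S)
    (hoK : Ind (insert o K)) : ∃ v ∈ S \ K, Ind (insert o (S.erase v)) := by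
  have hoK' := card_insert_of_notMem fun h => ho (hKS h)
  obtain ⟨J, hKJ, hJ, hJind, hJcard⟩ := exists_indep_superset_card_eq h_aug hS hoK (by omega)
  have hJS : J ⊆ insert o S := hJ.trans (by rw [insert_union, union_eq_right.2 hKS])
  have hoJ : o ∈ J := hKJ (mem_insert_self o K)
  obtain ⟨v, hvS, hvJ⟩ : ∃ v ∈ S, v ∉ J := by
    by_contra! h
    have := card_le_card (insert_subset hoJ h)
    rw [card_insert_of_notMem ho] at this
    omega
  refine ⟨v, mem_sdiff.2 ⟨hvS, fun hvK => hvJ (hKJ (mem_insert_of_mem hvK))⟩, ?_⟩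
  have hJsub : J ⊆ insert o (S.erase v) := fun x hx => by
    rcases mem_insert.1 (hJS hx) with rfl | hxS
    · exact mem_insert_self _ _
    · exact mem_insert_of_mem (mem_erase.2 ⟨fun h => hvJ (h ▸ hx), hxS⟩)
  have hcard : (insert o (S.erase v)).card = S.card := by
    rw [card_insert_of_notMem fun h => ho (mem_of_mem_erase h), card_erase_add_one hvS]
  rwa [← eq_of_subset_of_card_le hJsub (by omega)]

lemma card_le_card_biUnion_swap [DecidablePred Ind]
    (h_hered : ∀ ⦃S T : Finset U⦄, Ind T → S ⊆ T → Ind S)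
    (h_aug : ∀ ⦃A B : Finset U⦄, Ind A → Ind B → B.card < A.card → ∃ e ∈ A \ B, Ind (insert e B))
    {S O X : Finset U} (hS : Ind S) (hO : Ind O) (hcard : O.card ≤ S.card) (hX : X ⊆ O \ S) :
    X.card ≤ (X.biUnion fun o => {v ∈ S \ O | Ind (insert o (S.erase v))}).card := by
  set N := X.biUnion fun o => {v ∈ S \ O | Ind (insert o (S.erase v))}
  by_contra! hlt
  have hN : N ⊆ S \ O := biUnion_subset.2 fun _ _ => filter_subset _ _
  have hAN : Disjoint (S ∩ O) N := (disjoint_sdiff_inter S O).symm.mono_right hN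
  have hAX : Disjoint (S ∩ O) X := by
    rw [inter_comm]
    exact (disjoint_sdiff_inter O S).symm.mono_right hX
  have hANS : S ∩ O ∪ N ⊆ S := union_subset inter_subset_left (hN.trans sdiff_subset)
  have hAXO : S ∩ O ∪ X ⊆ O := union_subset inter_subset_right (hX.trans sdiff_subset)
  have hlt' : (S ∩ O ∪ N).card < (S ∩ O ∪ X).card := by
    rw [card_union_of_disjoint hAN, card_union_of_disjoint hAX]
    omega
  obtain ⟨o, ho, hind⟩ := h_aug (h_hered hO hAXO) (h_hered hS hANS) hlt'
  have hoX : o ∈ X := by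
    simp only [mem_sdiff, mem_union] at ho
    tauto
  obtain ⟨v, hv, hvind⟩ := exists_indep_insert_erase h_aug hS hANS
    (hlt'.trans_le ((card_le_card hAXO).trans hcard)) (mem_sdiff.1 (hX hoX)).2 hind
  obtain ⟨hvS, hvAN⟩ := mem_sdiff.1 hv
  have hvO : v ∉ O := fun hvO => hvAN (mem_union_left _ (mem_inter.2 ⟨hvS, hvO⟩))
  exact hvAN (mem_union_right _
    (mem_biUnion.2 ⟨o, hoX, mem_filter.2 ⟨mem_sdiff.2 ⟨hvS, hvO⟩, hvind⟩⟩))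

lemma exists_injOn_swap
    (h_hered : ∀ ⦃S T : Finset U⦄, Ind T → S ⊆ T → Ind S)
    (h_aug : ∀ ⦃A B : Finset U⦄, Ind A → Ind B → B.card < A.card → ∃ e ∈ A \ B, Ind (insert e B))
    {S O : Finset U} (hS : Ind S) (hO : Ind O) (hcard : O.card ≤ S.card) :
    ∃ g : U → U, Set.InjOn g ↑(O \ S) ∧
      ∀ o ∈ O \ S, g o ∈ S \ O ∧ Ind (insert o (S.erase (g o))) := by
  classical
  obtain _ | _ := isEmpty_or_nonempty U
  · exact ⟨id, fun x => isEmptyElim x, fun o => isEmptyElim o⟩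
  obtain ⟨g, hg_inj, hg⟩ := exists_injOn_of_forall_card_le_card_biUnion fun X hX =>
    card_le_card_biUnion_swap h_hered h_aug hS hO hcard hX
  exact ⟨g, hg_inj, fun o ho => mem_filter.1 (hg o ho)⟩

end Matroid

theorem stmt_3_general {U : Type*} [DecidableEq U] (d : U → U → ℝ)
    (hsymm : ∀ u v, d u v = d v u)
    (hnonneg : ∀ u v, 0 ≤ d u v)
    (hrefl : ∀ u, d u u = 0)
    (htri : ∀ u v w, d u w ≤ d u v + d v w)
    -- the matroid, given by its independent sets
    (Ind : Finset U → Prop)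
    (h_hered : ∀ ⦃S T : Finset U⦄, Ind T → S ⊆ T → Ind S)
    (h_aug : ∀ ⦃A B : Finset U⦄, Ind A → Ind B → B.card < A.card →
      ∃ e ∈ A \ B, Ind (insert e B))
    -- the rank of the matroid (the common cardinality of its bases) is at least 3
    (h_rank : ∀ B : Finset U, Ind B → (∀ T, Ind T → B ⊆ T → B = T) → 3 ≤ B.card)
    -- the quality function
    (f : Finset U → ℝ)
    (hfnonneg : ∀ S, 0 ≤ f S)
    (hfmono : ∀ S T : Finset U, S ⊆ T → f S ≤ f T)
    (hfsub : ∀ (S T : Finset U) (u : U), S ⊆ T →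
      f (insert u T) - f T ≤ f (insert u S) - f S)
    (lam : ℝ) (hlam : 0 ≤ lam)
    -- `S` is a basis of the matroid which is locally optimal under single swaps
    (S : Finset U) (hSind : Ind S) (hSbasis : ∀ T, Ind T → S ⊆ T → S = T)
    (hlocal : ∀ u ∉ S, ∀ v ∈ S, Ind (insert u (S.erase v)) →
      f (insert u (S.erase v)) + lam * dispSet d (insert u (S.erase v)) ≤
        f S + lam * dispSet d S)
    -- `O` is any basis of the matroid
    (O : Finset U) (hOind : Ind O) (hObasis : ∀ T, Ind T → O ⊆ T → O = T) :
    f S + lam * dispSet d S ≥ (1 / 2) * (f O + lam * dispSet d O) := by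
  obtain ⟨g, hg_inj, hg⟩ := exists_injOn_swap h_hered h_aug hSind hOind
    (card_le_card_of_maximal h_aug hSind hSbasis hOind)
  have hf : f O ≤ 2 * f S + ∑ o ∈ O \ S, (f (insert o (S.erase (g o))) - f S) :=
    (hfmono O (S ∪ O \ S) (subset_union_right.trans union_sdiff_self_eq_union.superset)).trans
      (IsSubmodular.union_le_two_mul_add_sum_swap hfsub hfnonneg hg_inj
        fun o ho => (mem_sdiff.1 (hg o ho).1).1)
  have hd := dispSet_le_two_mul_add_sum_swap hsymm hnonneg hrefl htri hg_inj
    (fun o ho => (hg o ho).1) (h_rank O hOind hObasis)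
  have hswap : ∑ o ∈ O \ S, ((f (insert o (S.erase (g o))) - f S) +
      lam * (dispSet d (insert o (S.erase (g o))) - dispSet d S)) ≤ 0 :=
    sum_nonpos fun o ho => by
      linarith [hlocal o (mem_sdiff.1 ho).2 (g o) (mem_sdiff.1 (hg o ho).1).1 (hg o ho).2]
  rw [sum_add_distrib, ← mul_sum] at hswap
  linarith [mul_le_mul_of_nonneg_left hd hlam]

/-- Single-swap local search is a 2-approximation for max-sum diversification with a
normalized, non-negative, monotone submodular quality function subject to the constraint
of being a basis of a matroid (given by its independent sets `Ind`) of rank at least 3. -/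
theorem stmt_3 {U : Type*} [Fintype U] [DecidableEq U] (d : U → U → ℝ)
    (hsymm : ∀ u v, d u v = d v u)
    (hnonneg : ∀ u v, 0 ≤ d u v)
    (hrefl : ∀ u, d u u = 0)
    (htri : ∀ u v w, d u w ≤ d u v + d v w)
    -- the matroid, given by its independent sets
    (Ind : Finset U → Prop)
    (h_empty : Ind ∅)
    (h_hered : ∀ ⦃S T : Finset U⦄, Ind T → S ⊆ T → Ind S)
    (h_aug : ∀ ⦃A B : Finset U⦄, Ind A → Ind B → B.card < A.card →
      ∃ e ∈ A \ B, Ind (insert e B))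
    -- the rank of the matroid (the common cardinality of its bases) is at least 3
    (h_rank : ∀ B : Finset U, Ind B → (∀ T, Ind T → B ⊆ T → B = T) → 3 ≤ B.card)
    -- the quality function
    (f : Finset U → ℝ)
    (hf0 : f ∅ = 0)
    (hfnonneg : ∀ S, 0 ≤ f S)
    (hfmono : ∀ S T : Finset U, S ⊆ T → f S ≤ f T)
    (hfsub : ∀ (S T : Finset U) (u : U), S ⊆ T →
      f (insert u T) - f T ≤ f (insert u S) - f S)
    (lam : ℝ) (hlam : 0 ≤ lam)
    -- `S` is a basis of the matroid which is locally optimal under single swaps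
    (S : Finset U) (hSind : Ind S) (hSbasis : ∀ T, Ind T → S ⊆ T → S = T)
    (hlocal : ∀ u ∉ S, ∀ v ∈ S, Ind (insert u (S.erase v)) →
      f (insert u (S.erase v)) + lam * dispSet d (insert u (S.erase v)) ≤
        f S + lam * dispSet d S)
    -- `O` is any basis of the matroid
    (O : Finset U) (hOind : Ind O) (hObasis : ∀ T, Ind T → O ⊆ T → O = T) :
    f S + lam * dispSet d S ≥ (1 / 2) * (f O + lam * dispSet d O) :=
  stmt_3_general d hsymm hnonneg hrefl htri Ind h_hered h_aug h_rank f hfnonneg hfmono hfsub lam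
    hlam S hSind hSbasis hlocal O hOind hObasis
end

section
/- Let p ≥ 2 with |U| ≥ p, let f be a normalized, non-negative, monotone submodular set function on U, let λ ≥ 0, and let G_0 = ∅, G_{i+1} = G_i ∪ {u_{i+1}} for 0 ≤ i < p, where each u_{i+1} ∈ U∖G_i maximizes (1/2)(f(G_i∪{u}) − f(G_i)) + λ·Σ_{v∈G_i} d(u,v) over u ∈ U∖G_i. Then for every O ⊆ U with |O| = p and every index 0 ≤ i ≤ p−1 such that |O∖G_i| ≥ 2, writing C = O∖G_i, the following holds: Σ_{v∈C} [ (1/2)(f(G_i∪{v}) − f(G_i)) + λ·Σ_{u∈G_i} d(v,u) ] ≥ (1/2)·f(O) − (1/2)·f(G_p) + λ·(i·|C|/(p(p−1)))·d(O). -/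
open Finset

section InsertChain

variable {α : Type*} [DecidableEq α] {G : ℕ → Finset α} {u : ℕ → α} {n : ℕ}

theorem card_of_insert_chain
    (hG : ∀ j < n, u j ∉ G j ∧ G (j + 1) = insert (u j) (G j)) {j : ℕ} (hj : j ≤ n) :
    (G j).card = (G 0).card + j := by
  induction j with
  | zero => rfl
  | succ j ih =>
    obtain ⟨hu, hsucc⟩ := hG j hj
    rw [hsucc, card_insert_of_notMem hu, ih (by omega), add_assoc]

theorem subset_of_insert_chain
    (hG : ∀ j < n, G (j + 1) = insert (u j) (G j)) {j k : ℕ} (hjk : j ≤ k) (hk : k ≤ n) :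
    G j ⊆ G k := by
  induction k, hjk using Nat.le_induction with
  | base => exact subset_rfl
  | succ k _ ih =>
    rw [hG k hk]
    exact (ih (by omega)).trans (subset_insert _ _)

end InsertChain

theorem sub_le_sum_sdiff_of_submodular {U : Type*} [DecidableEq U] {f : Finset U → ℝ}
    (hmono : ∀ S T : Finset U, S ⊆ T → f S ≤ f T)
    (hsub : ∀ (S T : Finset U) (u : U), S ⊆ T → f (insert u T) - f T ≤ f (insert u S) - f S)
    {S T : Finset U} (hST : S ⊆ T) (O : Finset U) :
    f O - f T ≤ ∑ v ∈ O \ S, (f (insert v S) - f S) := by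
  have hunion : ∀ C : Finset U, f (S ∪ C) - f S ≤ ∑ v ∈ C, (f (insert v S) - f S) := by
    intro C
    induction C using Finset.induction_on with
    | empty => simp
    | insert a C ha ih =>
      rw [sum_insert ha, union_insert]
      linarith [hsub S (S ∪ C) a subset_union_left]
  have := hunion (O \ S)
  rw [union_sdiff_self_eq_union] at this
  linarith [hmono O (S ∪ O) subset_union_right, hmono S T hST]

section Dispersion

variable {U : Type*} [DecidableEq U] {d : U → U → ℝ}

theorem dispSet_union_of_disjoint (hsymm : ∀ u v, d u v = d v u) {A B : Finset U}
    (hAB : Disjoint A B) :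
    dispSet d (A ∪ B) = dispSet d A + dispSet d B + ∑ a ∈ A, ∑ b ∈ B, d a b := by
  have hcross : ∑ b ∈ B, ∑ a ∈ A, d b a = ∑ a ∈ A, ∑ b ∈ B, d a b := by
    rw [sum_comm]; exact sum_congr rfl fun _ _ => sum_congr rfl fun _ _ => hsymm _ _
  simp only [dispSet, sum_union hAB, sum_add_distrib, hcross]
  ring

/-- Each `d a a'` is at most `d a b + d b a'` for every `b ∈ B`; averaging over `B` and
summing over pairs in `A` counts each `a ∈ A` in `2 (|A| - 1)` pairs. -/
theorem card_mul_dispSet_le (hsymm : ∀ u v, d u v = d v u) (hrefl : ∀ u, d u u = 0)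
    (htri : ∀ u v w, d u w ≤ d u v + d v w) (A B : Finset U) :
    B.card * dispSet d A ≤ (A.card - 1) * ∑ a ∈ A, ∑ b ∈ B, d a b := by
  set s : U → ℝ := fun a => ∑ b ∈ B, d a b
  have hpair : ∀ a a', B.card * d a a' ≤ s a + s a' := fun a a' => by
    rw [← nsmul_eq_mul, ← sum_const, ← sum_add_distrib]
    exact sum_le_sum fun b _ => (htri a b a').trans_eq (by rw [hsymm a' b])
  have hrow : ∀ a ∈ A, ∑ a' ∈ A.erase a, (s a + s a') =
      (A.card - 1) * s a + (∑ a' ∈ A, s a' - s a) := by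
    intro a ha
    rw [sum_add_distrib, sum_const, nsmul_eq_mul, card_erase_of_mem ha, sum_erase_eq_sub ha,
      Nat.cast_pred (card_pos.2 ⟨a, ha⟩)]
  calc B.card * dispSet d A
      = (∑ a ∈ A, ∑ a' ∈ A.erase a, B.card * d a a') / 2 := by
        have hdiag : ∀ a ∈ A, ∑ a' ∈ A.erase a, d a a' = ∑ a' ∈ A, d a a' :=
          fun a _ => sum_erase _ (hrefl a)
        simp only [dispSet, ← mul_sum, sum_congr rfl hdiag]
        ring
    _ ≤ (∑ a ∈ A, ∑ a' ∈ A.erase a, (s a + s a')) / 2 := by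
        gcongr with a _ a' _; exact hpair a a'
    _ = (A.card - 1) * ∑ a ∈ A, s a := by
        rw [sum_congr rfl hrow, sum_add_distrib, sum_sub_distrib, sum_const, nsmul_eq_mul,
          ← mul_sum]
        ring

theorem card_mul_card_sdiff_mul_dispSet_le (hsymm : ∀ u v, d u v = d v u)
    (hnonneg : ∀ u v, 0 ≤ d u v) (hrefl : ∀ u, d u u = 0)
    (htri : ∀ u v w, d u w ≤ d u v + d v w) {G O : Finset U} (hGO : G.card ≤ O.card) :
    G.card * (O \ G).card * dispSet d O ≤
      O.card * (O.card - 1) * ∑ v ∈ O \ G, ∑ x ∈ G, d v x := by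
  set C := O \ G
  set M := O ∩ G
  set Z := G \ O
  set X := ∑ v ∈ C, ∑ x ∈ M, d v x
  set Y := ∑ v ∈ C, ∑ x ∈ Z, d v x
  have hcardO : (C.card : ℝ) + M.card = O.card := by
    exact_mod_cast card_sdiff_add_card_inter O G
  have hcardG : (Z.card : ℝ) + M.card = G.card := by
    rw [show M = G ∩ O from inter_comm _ _]; exact_mod_cast card_sdiff_add_card_inter G O
  have hsplit : ∑ v ∈ C, ∑ x ∈ G, d v x = X + Y := by
    rw [← sum_add_distrib]
    refine sum_congr rfl fun v _ => ?_
    rw [show M = G ∩ O from inter_comm _ _, sum_inter_add_sum_sdiff]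
  have hcross : ∑ x ∈ M, ∑ v ∈ C, d x v = X := by
    rw [sum_comm]; exact sum_congr rfl fun _ _ => sum_congr rfl fun _ _ => hsymm _ _
  have hO : dispSet d O = dispSet d C + dispSet d M + X := by
    rw [← dispSet_union_of_disjoint hsymm (disjoint_sdiff_inter O G), sdiff_union_inter]
  have hCM := card_mul_dispSet_le hsymm hrefl htri C M
  have hCZ := card_mul_dispSet_le hsymm hrefl htri C Z
  have hMC := card_mul_dispSet_le hsymm hrefl htri M C
  rw [hcross] at hMC
  have hX : 0 ≤ X := sum_nonneg fun _ _ => sum_nonneg fun _ _ => hnonneg _ _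
  have hY : 0 ≤ Y := sum_nonneg fun _ _ => sum_nonneg fun _ _ => hnonneg _ _
  have hdiff : (0 : ℝ) ≤ C.card - Z.card := by
    have : (G.card : ℝ) ≤ O.card := by exact_mod_cast hGO
    linarith
  rw [hO, hsplit, ← hcardO, ← hcardG]
  have hslack : 0 ≤ (M.card : ℝ) * ((C.card - Z.card) * X + (C.card + M.card) * Y) :=
    mul_nonneg (Nat.cast_nonneg _) (add_nonneg (mul_nonneg hdiff hX) (by positivity))
  linear_combination (Z.card + M.card : ℝ) * hMC + mul_le_mul_of_nonneg_left hCM hdiff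
    + (C.card + M.card : ℝ) * hCZ + hslack

end Dispersion

theorem stmt_19_general {U : Type*} [DecidableEq U] (d : U → U → ℝ)
    (hsymm : ∀ u v, d u v = d v u)
    (hnonneg : ∀ u v, 0 ≤ d u v)
    (hrefl : ∀ u, d u u = 0)
    (htri : ∀ u v w, d u w ≤ d u v + d v w)
    (f : Finset U → ℝ)
    (hfmono : ∀ S T : Finset U, S ⊆ T → f S ≤ f T)
    (hfsub : ∀ (S T : Finset U) (u : U), S ⊆ T →
      f (insert u T) - f T ≤ f (insert u S) - f S)
    (lam : ℝ) (hlam : 0 ≤ lam)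
    (p : ℕ) (hp : 2 ≤ p)
    (G : ℕ → Finset U) (u : ℕ → U)
    (hG0 : G 0 = ∅)
    (hstep : ∀ i < p, u i ∉ G i ∧ G (i + 1) = insert (u i) (G i) ∧
      ∀ v ∉ G i,
        (1 / 2) * (f (insert v (G i)) - f (G i)) + lam * ∑ x ∈ G i, d v x ≤
        (1 / 2) * (f (insert (u i) (G i)) - f (G i)) + lam * ∑ x ∈ G i, d (u i) x)
    (O : Finset U) (hO : O.card = p)
    (i : ℕ) (hi : i ≤ p - 1) :
    ∑ v ∈ O \ G i,
        ((1 / 2) * (f (insert v (G i)) - f (G i)) + lam * ∑ x ∈ G i, d v x) ≥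
      (1 / 2) * f O - (1 / 2) * f (G p) +
        lam * ((i : ℝ) * (((O \ G i).card : ℝ)) / ((p : ℝ) * ((p : ℝ) - 1))) *
          dispSet d O := by
  have hip : i ≤ p := hi.trans (Nat.sub_le p 1)
  have hcard : (G i).card = i := by
    simpa [hG0] using card_of_insert_chain (fun j hj => ⟨(hstep j hj).1, (hstep j hj).2.1⟩) hip
  have hf : f O - f (G p) ≤ ∑ v ∈ O \ G i, (f (insert v (G i)) - f (G i)) :=
    sub_le_sum_sdiff_of_submodular hfmono hfsub
      (subset_of_insert_chain (fun j hj => (hstep j hj).2.1) hip le_rfl) O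
  have hd := card_mul_card_sdiff_mul_dispSet_le hsymm hnonneg hrefl htri (G := G i) (O := O)
    (by rw [hcard, hO]; exact hip)
  rw [hcard, hO] at hd
  have hpp : (0 : ℝ) < p * (p - 1) := by
    have : (2 : ℝ) ≤ p := by exact_mod_cast hp
    nlinarith
  have hd' : (i : ℝ) * (O \ G i).card / (p * (p - 1)) * dispSet d O ≤
      ∑ v ∈ O \ G i, ∑ x ∈ G i, d v x := by
    rw [div_mul_eq_mul_div, div_le_iff₀ hpp]
    linarith
  rw [ge_iff_le, sum_add_distrib, ← mul_sum, ← mul_sum, mul_assoc]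
  linarith [mul_le_mul_of_nonneg_left hd' hlam]

/-- Key inequality in the analysis of the greedy algorithm for max-sum diversification:
for every `O` with `|O| = p` and step `0 ≤ i ≤ p-1` with `C = O \ Gᵢ` of size at least
2, `Σ_{v∈C} [(1/2)(f(Gᵢ∪{v}) - f(Gᵢ)) + λ Σ_{u∈Gᵢ} d(v,u)] ≥
(1/2)f(O) - (1/2)f(G_p) + λ (i|C|/(p(p-1))) d(O)`. -/
theorem stmt_19 {U : Type*} [Fintype U] [DecidableEq U] (d : U → U → ℝ)
    (hsymm : ∀ u v, d u v = d v u)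
    (hnonneg : ∀ u v, 0 ≤ d u v)
    (hrefl : ∀ u, d u u = 0)
    (htri : ∀ u v w, d u w ≤ d u v + d v w)
    (f : Finset U → ℝ)
    (hf0 : f ∅ = 0)
    (hfnonneg : ∀ S, 0 ≤ f S)
    (hfmono : ∀ S T : Finset U, S ⊆ T → f S ≤ f T)
    (hfsub : ∀ (S T : Finset U) (u : U), S ⊆ T →
      f (insert u T) - f T ≤ f (insert u S) - f S)
    (lam : ℝ) (hlam : 0 ≤ lam)
    (p : ℕ) (hp : 2 ≤ p) (hUp : p ≤ Fintype.card U)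
    (G : ℕ → Finset U) (u : ℕ → U)
    (hG0 : G 0 = ∅)
    (hstep : ∀ i < p, u i ∉ G i ∧ G (i + 1) = insert (u i) (G i) ∧
      ∀ v ∉ G i,
        (1 / 2) * (f (insert v (G i)) - f (G i)) + lam * ∑ x ∈ G i, d v x ≤
        (1 / 2) * (f (insert (u i) (G i)) - f (G i)) + lam * ∑ x ∈ G i, d (u i) x)
    (O : Finset U) (hO : O.card = p)
    (i : ℕ) (hi : i ≤ p - 1) (hC : 2 ≤ (O \ G i).card) :
    ∑ v ∈ O \ G i,
        ((1 / 2) * (f (insert v (G i)) - f (G i)) + lam * ∑ x ∈ G i, d v x) ≥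
      (1 / 2) * f O - (1 / 2) * f (G p) +
        lam * ((i : ℝ) * (((O \ G i).card : ℝ)) / ((p : ℝ) * ((p : ℝ) - 1))) *
          dispSet d O :=
  stmt_19_general d hsymm hnonneg hrefl htri f hfmono hfsub lam hlam p hp G u hG0 hstep O hO i hi
end
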